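/- Let ω > 0 and a₀, τ_R ∈ ℝ with a₀ τ_R < 0, and for ε ≥ 0 and parameters μ, η define the map P(ε; μ, η) = (π/ω³) η + (1 + (π/ω) η + (4πa₀/ω⁵) μ²) ε + (4√2/3) τ_R ε^{3/2}. Then there exist μ̄ > 0 and functions η_SN : (0, μ̄) → ℝ and ε* : (0, μ̄) → (0, ∞) such that for every μ ∈ (0, μ̄), P(ε*(μ); μ, η_SN(μ)) = ε*(μ) and ∂P/∂ε (ε*(μ); μ, η_SN(μ)) = 1; moreover η_SN(μ) = −(8π²a₀³/(3ω¹²τ_R²)) μ⁶ + o(μ⁶) as μ → 0⁺. -/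

import Mathlib

/-!
Substituting `ε = 2u²` makes `P` polynomial in `u`. The unit-multiplier condition forces the
linear coefficient to be `1 + (π/ω)η + (4πa₀/ω⁵)μ² = 1 - 4τR u`, and then the fixed-point
condition gives `η = 8τRω³u³/(3π)`. Together they reduce to the depressed cubic
`u³ + p u = q μ²` with `p = 3/(2ω²)` and `q = -3πa₀/(2τRω⁷)`, which is positive because
`a₀τR < 0`. Its nonnegative root satisfies `u = qμ²/(u² + p)`, so `u ~ (q/p)μ²` and
`η ~ (8τRω³/(3π))(q/p)³μ⁶`, which is the stated coefficient.
-/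

open Filter Asymptotics Topology Real

theorem exists_nonneg_cube_add_mul_eq {p t : ℝ} (hp : 0 < p) (ht : 0 ≤ t) :
    ∃ s, 0 ≤ s ∧ s ^ 3 + p * s = t := by
  have hcont : ContinuousOn (fun s : ℝ => s ^ 3 + p * s) (Set.Icc 0 (t / p)) := by fun_prop
  have hmem : t ∈ Set.Icc ((0 : ℝ) ^ 3 + p * 0) ((t / p) ^ 3 + p * (t / p)) := by
    rw [mul_div_cancel₀ t hp.ne']
    exact ⟨by simpa using ht, le_add_of_nonneg_left (by positivity)⟩
  obtain ⟨s, ⟨hs0, -⟩, hs⟩ := intermediate_value_Icc (by positivity) hcont hmem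
  exact ⟨s, hs0, hs⟩

theorem tendsto_div_sq_of_cube_add_mul_eq {p q : ℝ} (hp : 0 < p) {s : ℝ → ℝ}
    (hs0 : ∀ μ, 0 ≤ s μ) (hs : ∀ μ, s μ ^ 3 + p * s μ = q * μ ^ 2) :
    Tendsto (fun μ => s μ / μ ^ 2) (𝓝[>] 0) (𝓝 (q / p)) := by
  have hs_le : ∀ μ, s μ ≤ q * μ ^ 2 / p := fun μ => by
    rw [le_div_iff₀ hp, ← hs μ]
    nlinarith [pow_nonneg (hs0 μ) 3]
  have hs_tendsto : Tendsto s (𝓝 0) (𝓝 0) := by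
    have hbound : Tendsto (fun μ : ℝ => q * μ ^ 2 / p) (𝓝 0) (𝓝 0) := by
      simpa using ((continuous_const.mul (continuous_pow 2)).div_const p).tendsto (0 : ℝ)
    exact tendsto_of_tendsto_of_tendsto_of_le_of_le tendsto_const_nhds hbound hs0 hs_le
  have hlim : Tendsto (fun μ => q / (s μ ^ 2 + p)) (𝓝[>] 0) (𝓝 (q / p)) := by
    have hden : Tendsto (fun μ => s μ ^ 2 + p) (𝓝 0) (𝓝 p) := by
      simpa using (hs_tendsto.pow 2).add_const p
    exact (tendsto_const_nhds.div hden hp.ne').mono_left nhdsWithin_le_nhds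
  refine hlim.congr' (eventually_nhdsWithin_of_forall fun μ (hμ : 0 < μ) => ?_)
  rw [div_eq_div_iff (by positivity) (by positivity)]
  linear_combination -(hs μ)

theorem isLittleO_const_mul_cube_sub {s : ℝ → ℝ} {r : ℝ}
    (hs : Tendsto (fun μ => s μ / μ ^ 2) (𝓝[>] 0) (𝓝 r)) (K : ℝ) :
    (fun μ => K * s μ ^ 3 - K * r ^ 3 * μ ^ 6) =o[𝓝[>] (0 : ℝ)] fun μ => μ ^ 6 := by
  have hne : ∀ᶠ μ : ℝ in 𝓝[>] 0, μ ≠ 0 := eventually_nhdsWithin_of_forall fun μ hμ => ne_of_gt hμ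
  rw [isLittleO_iff_tendsto' (hne.mono fun μ hμ h => absurd h (pow_ne_zero 6 hμ))]
  have hlim := ((hs.pow 3).const_mul K).sub_const (K * r ^ 3)
  rw [sub_self] at hlim
  refine hlim.congr' (hne.mono fun μ hμ => ?_)
  field_simp

noncomputable def poincareMap (ω a₀ τR ε μ η : ℝ) : ℝ :=
  (π / ω ^ 3) * η + (1 + (π / ω) * η + (4 * π * a₀ / ω ^ 5) * μ ^ 2) * ε
    + (4 * √2 / 3) * τR * (ε * √ε)

theorem hasDerivAt_mul_sqrt {x : ℝ} (hx : 0 < x) :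
    HasDerivAt (fun ε => ε * √ε) (3 / 2 * √x) x := by
  refine ((hasDerivAt_id x).mul (Real.hasDerivAt_sqrt hx.ne')).congr_deriv ?_
  have hsqrt : √x ≠ 0 := (Real.sqrt_pos.2 hx).ne'
  field_simp
  rw [id, Real.sq_sqrt hx.le]
  ring

theorem hasDerivAt_poincareMap {ω a₀ τR ε μ η : ℝ} (hε : 0 < ε) :
    HasDerivAt (fun ε => poincareMap ω a₀ τR ε μ η)
      (1 + (π / ω) * η + (4 * π * a₀ / ω ^ 5) * μ ^ 2 + 2 * √2 * τR * √ε) ε := by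
  refine (((hasDerivAt_id ε).const_mul _).const_add _ |>.add
    ((hasDerivAt_mul_sqrt hε).const_mul _)).congr_deriv ?_
  ring

theorem poincareMap_saddle_node {ω a₀ τR μ u η : ℝ} (hω : ω ≠ 0) (hu : 0 < u)
    (hcubic : 2 * τR * ω ^ 7 * u ^ 3 + 3 * τR * ω ^ 5 * u + 3 * π * a₀ * μ ^ 2 = 0)
    (hη : η = 8 * τR * ω ^ 3 * u ^ 3 / (3 * π)) :
    poincareMap ω a₀ τR (2 * u ^ 2) μ η = 2 * u ^ 2 ∧
      HasDerivAt (fun ε => poincareMap ω a₀ τR ε μ η) 1 (2 * u ^ 2) := by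
  subst hη
  have hsqrt : √(2 * u ^ 2) = √2 * u := by
    rw [Real.sqrt_mul zero_le_two, Real.sqrt_sq hu.le]
  have h2 : √2 ^ 2 = 2 := Real.sq_sqrt zero_le_two
  have hlin : (π / ω) * (8 * τR * ω ^ 3 * u ^ 3 / (3 * π)) + (4 * π * a₀ / ω ^ 5) * μ ^ 2
      = -4 * τR * u := by
    field_simp
    linear_combination 4 * hcubic
  refine ⟨?_, (hasDerivAt_poincareMap (by positivity)).congr_deriv ?_⟩
  · have hconst : (π / ω ^ 3) * (8 * τR * ω ^ 3 * u ^ 3 / (3 * π)) = 8 / 3 * τR * u ^ 3 := by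
      field_simp
    rw [poincareMap, hconst, hsqrt, add_assoc 1, hlin]
    linear_combination 8 / 3 * τR * u ^ 3 * h2
  · rw [hsqrt, add_assoc 1, hlin]
    linear_combination 2 * τR * u * h2

/-- The saddle-node curve of the full Poincaré map
`P(ε;μ,η) = (π/ω³)η + (1 + (π/ω)η + (4πa₀/ω⁵)μ²)ε + (4√2/3)τ_R ε^{3/2}`. If `a₀τ_R < 0`,
there are functions `η_SN(μ)`, `ε*(μ) > 0` (for `0 < μ < μ̄`) satisfying the fixed-point
and unit-multiplier conditions, with
`η_SN(μ) = −(8π²a₀³/(3ω¹²τ_R²))μ⁶ + o(μ⁶)` as `μ → 0⁺`. -/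
theorem saddle_node_curve_h3
    (ω a₀ τR : ℝ) (hω : 0 < ω) (hsign : a₀ * τR < 0) :
    let P : ℝ → ℝ → ℝ → ℝ := fun ε μ η =>
      (Real.pi / ω ^ 3) * η + (1 + (Real.pi / ω) * η + (4 * Real.pi * a₀ / ω ^ 5) * μ ^ 2) * ε
        + (4 * Real.sqrt 2 / 3) * τR * (ε * Real.sqrt ε)
    ∃ μbar > 0, ∃ ηSN εs : ℝ → ℝ,
      (∀ μ ∈ Set.Ioo (0 : ℝ) μbar,
        0 < εs μ ∧
        P (εs μ) μ (ηSN μ) = εs μ ∧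
        deriv (fun ε => P ε μ (ηSN μ)) (εs μ) = 1) ∧
      -- η_SN(μ) = −(8π²a₀³/(3ω¹²τ_R²))μ⁶ + o(μ⁶)
      ((fun μ => ηSN μ - (-(8 * Real.pi ^ 2 * a₀ ^ 3 / (3 * ω ^ 12 * τR ^ 2)) * μ ^ 6))
        =o[𝓝[>] (0 : ℝ)] fun μ => μ ^ 6) := by
  intro P
  have hτ : τR ≠ 0 := by rintro rfl; simp at hsign
  have hp : 0 < 3 / (2 * ω ^ 2) := by positivity
  have hq : 0 < -(3 * π * (a₀ * τR)) / (2 * τR ^ 2 * ω ^ 7) :=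
    div_pos (by nlinarith [pi_pos]) (by positivity)
  choose u hu0 hu using fun μ : ℝ => exists_nonneg_cube_add_mul_eq hp (by positivity : 0 ≤
    -(3 * π * (a₀ * τR)) / (2 * τR ^ 2 * ω ^ 7) * μ ^ 2)
  refine ⟨1, one_pos, fun μ => 8 * τR * ω ^ 3 * u μ ^ 3 / (3 * π), fun μ => 2 * u μ ^ 2,
    fun μ hμ => ?_, ?_⟩
  · have hu_pos : 0 < u μ := (hu0 μ).lt_of_ne fun h =>
      (mul_pos hq (pow_pos hμ.1 2)).ne' (by simpa [← h] using (hu μ).symm)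
    have hcubic : 2 * τR * ω ^ 7 * u μ ^ 3 + 3 * τR * ω ^ 5 * u μ + 3 * π * a₀ * μ ^ 2 = 0 := by
      have := hu μ
      field_simp at this
      linear_combination this
    obtain ⟨hfix, hderiv⟩ := poincareMap_saddle_node hω.ne' hu_pos hcubic rfl
    exact ⟨by positivity, hfix, hderiv.deriv⟩
  · have hL : 8 * τR * ω ^ 3 / (3 * π)
          * (-(3 * π * (a₀ * τR)) / (2 * τR ^ 2 * ω ^ 7) / (3 / (2 * ω ^ 2))) ^ 3
        = -(8 * π ^ 2 * a₀ ^ 3 / (3 * ω ^ 12 * τR ^ 2)) := by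
      field_simp
    refine (isLittleO_const_mul_cube_sub (tendsto_div_sq_of_cube_add_mul_eq hp hu0 hu)
      (8 * τR * ω ^ 3 / (3 * π))).congr_left fun μ => ?_
    rw [hL]
    ring
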